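/- arXiv:quant-ph/9703004 — 4 statements merged into one kernel-verified Lean document; each statement's English description precedes it below -/
import Mathlib

section
/- Let ρ be a separable state acting on the Hilbert space H = H₁ ⊗ H₂ with dim H = m < ∞. Then there exist N ≤ m² product unit vectors ψ_i ⊗ φ_k (indexed by a finite set I of pairs with #I = N) and probabilities p_{ik} (p_{ik} ≥ 0, Σ p_{ik} = 1) such that ρ = Σ_{(i,k)∈I} p_{ik} P_{ψ_i} ⊗ P_{φ_k}, where P_ψ denotes the orthogonal projection onto the span of ψ. In particular every separable state on a finite-dimensional space is a finite convex combination of pure product states. -/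
/-! Pure product states form a compact set, and in finite dimension the convex hull of a compact
set is compact (Carathéodory), hence closed. By the spectral theorem every state is a convex
combination of rank-one projections, and the Kronecker product is bilinear, so every product
state, and therefore every separable state, lies in this convex hull. Carathéodory then writes
the state as a convex combination of affinely independent pure product states; as these are
Hermitian of trace one, affine independence is linear independence in the real space of
Hermitian matrices, of dimension `m²`. -/

open scoped ComplexOrder
open Matrix Kronecker

noncomputable section

/-- A quantum state: a positive semidefinite complex matrix of trace 1. -/
def IsState {n : Type*} [Fintype n] [DecidableEq n] (ρ : Matrix n n ℂ) : Prop :=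
  ρ.PosSemidef ∧ ρ.trace = 1

/-- Separability: membership in the closure of the convex hull of Kronecker
products of states. -/
def IsSepState {m₁ m₂ : ℕ}
    (ρ : Matrix (Fin m₁ × Fin m₂) (Fin m₁ × Fin m₂) ℂ) : Prop :=
  ρ ∈ closure (convexHull ℝ
    {σ : Matrix (Fin m₁ × Fin m₂) (Fin m₁ × Fin m₂) ℂ |
      ∃ (A : Matrix (Fin m₁) (Fin m₁) ℂ) (B : Matrix (Fin m₂) (Fin m₂) ℂ),
        IsState A ∧ IsState B ∧ σ = A ⊗ₖ B})

/-- The rank-one operator `|ψ⟩⟨ψ|` (orthogonal projection on `span ψ` for unit `ψ`). -/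
def proj {n : Type*} (ψ : n → ℂ) : Matrix n n ℂ :=
  fun i j => ψ i * star (ψ j)

/-- The tensor (Kronecker) product of two vectors. -/
def tens {m₁ m₂ : ℕ} (ψ : Fin m₁ → ℂ) (φ : Fin m₂ → ℂ) :
    Fin m₁ × Fin m₂ → ℂ := fun p => ψ p.1 * φ p.2

/-- Partial transposition on the second factor. -/
def pt₂ {m₁ m₂ : ℕ} (ρ : Matrix (Fin m₁ × Fin m₂) (Fin m₁ × Fin m₂) ℂ) :
    Matrix (Fin m₁ × Fin m₂) (Fin m₁ × Fin m₂) ℂ :=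
  fun p q => ρ (p.1, q.2) (q.1, p.2)

section Convexity

variable {𝕜 E : Type*} [Field 𝕜] [AddCommGroup E] [Module 𝕜 E]

theorem AffineIndependent.linearIndependent_of_apply_eq_one {ι : Type*} {p : ι → E}
    (hp : AffineIndependent 𝕜 p) (f : E →ₗ[𝕜] 𝕜) (hf : ∀ i, f (p i) = 1) :
    LinearIndependent 𝕜 p := by
  refine linearIndependent_iff'.2 fun s g hg => hp.eq_zero_of_sum_eq_zero ?_ hg
  simpa [hf] using congrArg f hg

variable [LinearOrder 𝕜]

theorem apply_mem_convexHull_image2 {F G : Type*} [AddCommGroup F] [Module 𝕜 F]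
    [AddCommGroup G] [Module 𝕜 G] (f : E →ₗ[𝕜] F →ₗ[𝕜] G) {s : Set E} {t : Set F} {x : E} {y : F}
    (hx : x ∈ convexHull 𝕜 s) (hy : y ∈ convexHull 𝕜 t) :
    f x y ∈ convexHull 𝕜 (Set.image2 (fun a b => f a b) s t) := by
  have hxt : f x '' t ⊆ convexHull 𝕜 (Set.image2 (fun a b => f a b) s t) := by
    rintro _ ⟨b, hb, rfl⟩
    have : f.flip b '' convexHull 𝕜 s ⊆ convexHull 𝕜 (Set.image2 (fun a b => f a b) s t) := by
      rw [LinearMap.image_convexHull]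
      exact convexHull_mono (Set.image_subset_iff.2 fun a ha => Set.mem_image2_of_mem ha hb)
    exact this ⟨x, hx, rfl⟩
  have := convexHull_min hxt (convex_convexHull 𝕜 _)
  rw [← LinearMap.image_convexHull] at this
  exact this ⟨y, hy, rfl⟩

variable [IsStrictOrderedRing 𝕜]

theorem exists_fin_affineIndependent_of_mem_convexHull {s : Set E} {x : E}
    (hx : x ∈ convexHull 𝕜 s) :
    ∃ (k : ℕ) (z : Fin k → E) (w : Fin k → 𝕜), Set.range z ⊆ s ∧ AffineIndependent 𝕜 z ∧
      (∀ i, 0 ≤ w i) ∧ ∑ i, w i = 1 ∧ ∑ i, w i • z i = x := by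
  obtain ⟨ι, _, z, w, hzs, hz, hw₀, hw₁, rfl⟩ := eq_pos_convex_span_of_mem_convexHull hx
  let e := (Fintype.equivFin ι).symm
  refine ⟨_, z ∘ e, w ∘ e, (Set.range_comp_subset_range _ _).trans hzs,
    hz.comp_embedding e.toEmbedding, fun i => (hw₀ _).le, ?_, ?_⟩
  · exact (e.sum_comp w).trans hw₁
  · exact e.sum_comp fun i => w i • z i

end Convexity

theorem IsCompact.convexHull {E : Type*} [AddCommGroup E] [Module ℝ E] [TopologicalSpace E]
    [ContinuousAdd E] [ContinuousSMul ℝ E] [FiniteDimensional ℝ E] {s : Set E}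
    (hs : IsCompact s) : IsCompact (convexHull ℝ s) := by
  let combo (k : ℕ) : (Fin k → ℝ) × (Fin k → E) → E := fun p => ∑ i, p.1 i • p.2 i
  suffices _root_.convexHull ℝ s = ⋃ k ∈ Finset.range (Module.finrank ℝ E + 2),
      combo k '' (stdSimplex ℝ (Fin k) ×ˢ Set.univ.pi fun _ => s) by
    rw [this]
    exact (Finset.range _).isCompact_biUnion fun k _ =>
      ((isCompact_stdSimplex ℝ (Fin k)).prod (isCompact_univ_pi fun _ => hs)).image
        (by fun_prop)
  apply subset_antisymm
  · intro x hx
    obtain ⟨k, z, w, hzs, hz, hw₀, hw₁, rfl⟩ := exists_fin_affineIndependent_of_mem_convexHull hx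
    have hk : k ≤ Module.finrank ℝ E + 1 := by
      simpa using hz.card_le_finrank_succ.trans (Nat.succ_le_succ (Submodule.finrank_le _))
    exact Set.mem_biUnion (Finset.mem_range.2 (Nat.lt_succ_of_le hk))
      ⟨(w, z), ⟨⟨hw₀, hw₁⟩, fun i _ => hzs ⟨i, rfl⟩⟩, rfl⟩
  · simp only [Set.iUnion_subset_iff, Set.image_subset_iff]
    rintro k - ⟨w, z⟩ ⟨⟨hw₀, hw₁⟩, hz⟩
    exact (convex_convexHull ℝ s).sum_mem (fun i _ => hw₀ i) hw₁
      fun i _ => subset_convexHull ℝ s (hz i trivial)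

section HermitianMatrices

variable {n : Type*} [Fintype n]

theorem finrank_selfAdjoint_matrix_le :
    Module.finrank ℝ (selfAdjoint.submodule ℝ (Matrix n n ℂ)) ≤ Fintype.card n ^ 2 := by
  let reAddIm : Matrix n n ℂ →ₗ[ℝ] Matrix n n ℝ :=
    { toFun := fun M => M.map fun z => z.re + z.im
      map_add' := fun M N => by
        ext
        simp only [map_apply, Matrix.add_apply, Complex.add_re, Complex.add_im]
        ring
      map_smul' := fun c M => by
        ext
        simp only [map_apply, Matrix.smul_apply, Complex.smul_re, Complex.smul_im, RingHom.id_apply,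
          smul_eq_mul]
        ring }
  -- at `(i, j)` and `(j, i)` the map reads `re ± im` of one entry, as `M i j = conj (M j i)`
  have hinj : Function.Injective (reAddIm ∘ₗ (selfAdjoint.submodule ℝ _).subtype) := by
    rw [← LinearMap.ker_eq_bot, LinearMap.ker_eq_bot']
    rintro ⟨M, hM⟩ hM0
    ext i j
    have hij := congrFun (congrFun hM0 i) j
    have hji := congrFun (congrFun hM0 j) i
    have hstar : star (M j i) = M i j := Matrix.IsHermitian.apply hM i j
    simp only [← hstar, reAddIm, LinearMap.coe_comp, LinearMap.coe_mk, AddHom.coe_mk,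
      Function.comp_apply, Submodule.subtype_apply, map_apply, Complex.star_def,
      Complex.conj_re, Complex.conj_im, Matrix.zero_apply] at hij hji
    show M i j = 0
    rw [← hstar, star_eq_zero]
    exact Complex.ext (by rw [Complex.zero_re]; linarith) (by rw [Complex.zero_im]; linarith)
  simpa [sq, Module.finrank_matrix] using LinearMap.finrank_le_finrank_of_injective hinj

theorem card_le_of_affineIndependent_of_trace_eq_one {ι : Type*} [Fintype ι]
    {z : ι → Matrix n n ℂ} (hz : AffineIndependent ℝ z) (hH : ∀ i, (z i).IsHermitian)
    (htr : ∀ i, (z i).trace = 1) : Fintype.card ι ≤ Fintype.card n ^ 2 := by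
  have hli : LinearIndependent ℝ z :=
    hz.linearIndependent_of_apply_eq_one (Complex.reLm ∘ₗ traceLinearMap n ℝ ℂ) (by simp [htr])
  calc Fintype.card ι = Module.finrank ℝ (Submodule.span ℝ (Set.range z)) :=
        (finrank_span_eq_card hli).symm
    _ ≤ Module.finrank ℝ (selfAdjoint.submodule ℝ (Matrix n n ℂ)) :=
        Submodule.finrank_mono (Submodule.span_le.2 (Set.range_subset_iff.2 hH))
    _ ≤ Fintype.card n ^ 2 := finrank_selfAdjoint_matrix_le

end HermitianMatrices

section Proj

variable {n : Type*}

theorem continuous_proj : Continuous (proj : (n → ℂ) → Matrix n n ℂ) :=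
  continuous_pi fun i => continuous_pi fun j => by unfold proj; fun_prop

theorem isHermitian_proj (ψ : n → ℂ) : (proj ψ).IsHermitian := by
  ext i j
  simp [proj, mul_comm]

end Proj

section PureStates

variable {n n₁ n₂ : Type*} [Fintype n] [Fintype n₁] [Fintype n₂]

variable (n) in
def pureStates : Set (Matrix n n ℂ) :=
  proj '' {ψ : n → ℂ | ∑ j, ‖ψ j‖ ^ 2 = 1}

variable (n₁ n₂) in
def pureProductStates : Set (Matrix (n₁ × n₂) (n₁ × n₂) ℂ) :=
  Set.image2 (· ⊗ₖ ·) (pureStates n₁) (pureStates n₂)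

theorem isCompact_setOf_sum_norm_sq_eq_one : IsCompact {ψ : n → ℂ | ∑ j, ‖ψ j‖ ^ 2 = 1} := by
  have : {ψ : n → ℂ | ∑ j, ‖ψ j‖ ^ 2 = 1} =
      (PiLp.homeomorph 2 fun _ : n => ℂ).symm ⁻¹' Metric.sphere 0 1 := by
    ext ψ
    rw [Set.mem_preimage, mem_sphere_zero_iff_norm,
      ← pow_eq_one_iff_of_nonneg (norm_nonneg _) two_ne_zero, EuclideanSpace.norm_sq_eq]
    rfl
  rw [this, Homeomorph.isCompact_preimage]
  exact isCompact_sphere _ _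

theorem isCompact_pureStates : IsCompact (pureStates n) :=
  isCompact_setOf_sum_norm_sq_eq_one.image continuous_proj

theorem isCompact_pureProductStates : IsCompact (pureProductStates n₁ n₂) := by
  rw [pureProductStates, ← Set.image_prod]
  exact (isCompact_pureStates.prod isCompact_pureStates).image
    (continuous_pi fun i => continuous_pi fun j => by simp only [kroneckerMap_apply]; fun_prop)

theorem trace_proj {ψ : n → ℂ} (hψ : ∑ j, ‖ψ j‖ ^ 2 = 1) : (proj ψ).trace = 1 := by
  simp [Matrix.trace, proj, Complex.mul_conj', ← Complex.ofReal_pow, ← Complex.ofReal_sum, hψ]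

theorem isHermitian_and_trace_eq_one_of_mem_pureProductStates
    {σ : Matrix (n₁ × n₂) (n₁ × n₂) ℂ} (hσ : σ ∈ pureProductStates n₁ n₂) :
    σ.IsHermitian ∧ σ.trace = 1 := by
  obtain ⟨_, ⟨ψ, hψ, rfl⟩, _, ⟨φ, hφ, rfl⟩, rfl⟩ := hσ
  refine ⟨?_, by rw [trace_kronecker, trace_proj hψ, trace_proj hφ, one_mul]⟩
  rw [IsHermitian, conjTranspose_kronecker, isHermitian_proj, isHermitian_proj]

variable [DecidableEq n] in
theorem Matrix.IsHermitian.sum_eigenvalues_smul_proj {A : Matrix n n ℂ} (hA : A.IsHermitian) :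
    ∑ i, hA.eigenvalues i • proj ⇑(hA.eigenvectorBasis i) = A := by
  conv_rhs => rw [hA.spectral_theorem, Unitary.conjStarAlgAut_apply]
  ext a b
  rw [Matrix.mul_apply]
  simp only [Matrix.sum_apply, Matrix.smul_apply, proj, Matrix.star_apply, Complex.real_smul,
    Matrix.mul_diagonal]
  exact Finset.sum_congr rfl fun _ _ => by
    simp only [RCLike.star_def, eigenvectorUnitary_apply, Complex.coe_algebraMap,
      Function.comp_apply]
    ring

variable [DecidableEq n] in
theorem IsState.mem_convexHull_pureStates {A : Matrix n n ℂ} (hA : IsState A) :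
    A ∈ convexHull ℝ (pureStates n) := by
  obtain ⟨hpsd, htr⟩ := hA
  rw [← hpsd.isHermitian.sum_eigenvalues_smul_proj]
  refine (convex_convexHull ℝ _).sum_mem (fun i _ => hpsd.eigenvalues_nonneg i) ?_
    fun i _ => subset_convexHull ℝ _ ⟨_, ?_, rfl⟩
  · have h := hpsd.isHermitian.trace_eq_sum_eigenvalues
    rwa [htr, ← RCLike.ofReal_sum, ← RCLike.ofReal_one, RCLike.ofReal_inj, eq_comm] at h
  · rw [Set.mem_ofPred_eq, ← EuclideanSpace.norm_sq_eq,
      hpsd.isHermitian.eigenvectorBasis.norm_eq_one, one_pow]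

theorem mem_pureProductStates_iff {σ : Matrix (n₁ × n₂) (n₁ × n₂) ℂ} :
    σ ∈ pureProductStates n₁ n₂ ↔ ∃ (ψ : n₁ → ℂ) (φ : n₂ → ℂ),
      ∑ j, ‖ψ j‖ ^ 2 = 1 ∧ ∑ j, ‖φ j‖ ^ 2 = 1 ∧ proj ψ ⊗ₖ proj φ = σ := by
  simp only [pureProductStates, pureStates, Set.mem_image2, Set.mem_image, Set.mem_ofPred_eq]
  constructor
  · rintro ⟨_, ⟨ψ, hψ, rfl⟩, _, ⟨φ, hφ, rfl⟩, rfl⟩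
    exact ⟨ψ, φ, hψ, hφ, rfl⟩
  · rintro ⟨ψ, φ, hψ, hφ, rfl⟩
    exact ⟨_, ⟨ψ, hψ, rfl⟩, _, ⟨φ, hφ, rfl⟩, rfl⟩

end PureStates

theorem separable_finite_decomposition_general {m₁ m₂ : ℕ}
    (ρ : Matrix (Fin m₁ × Fin m₂) (Fin m₁ × Fin m₂) ℂ)
    (hsep : IsSepState ρ) :
    ∃ N : ℕ, N ≤ (m₁ * m₂) ^ 2 ∧
      ∃ (ψ : Fin N → Fin m₁ → ℂ) (φ : Fin N → Fin m₂ → ℂ) (p : Fin N → ℝ),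
        (∀ i, ∑ j, ‖ψ i j‖ ^ 2 = 1) ∧
        (∀ i, ∑ j, ‖φ i j‖ ^ 2 = 1) ∧
        (∀ i, 0 ≤ p i) ∧ (∑ i, p i) = 1 ∧
        ρ = ∑ i, (p i : ℂ) • (proj (ψ i) ⊗ₖ proj (φ i)) := by
  have hprod : {σ | ∃ (A : Matrix (Fin m₁) (Fin m₁) ℂ) (B : Matrix (Fin m₂) (Fin m₂) ℂ),
      IsState A ∧ IsState B ∧ σ = A ⊗ₖ B} ⊆ convexHull ℝ (pureProductStates _ _) := by
    rintro _ ⟨A, B, hA, hB, rfl⟩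
    exact apply_mem_convexHull_image2 (kroneckerBilinear (R := ℝ)) hA.mem_convexHull_pureStates
      hB.mem_convexHull_pureStates
  have hρ : ρ ∈ convexHull ℝ (pureProductStates _ _) :=
    isCompact_pureProductStates.convexHull.isClosed.closure_subset_iff.2
      (convexHull_min hprod (convex_convexHull ℝ _)) hsep
  obtain ⟨N, z, p, hzP, hz, hp₀, hp₁, rfl⟩ := exists_fin_affineIndependent_of_mem_convexHull hρ
  have hzH i := isHermitian_and_trace_eq_one_of_mem_pureProductStates (hzP ⟨i, rfl⟩)
  have hN : N ≤ (m₁ * m₂) ^ 2 := by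
    simpa using card_le_of_affineIndependent_of_trace_eq_one hz (fun i => (hzH i).1)
      (fun i => (hzH i).2)
  choose ψ φ hψ hφ hψφ using fun i => mem_pureProductStates_iff.1 (hzP ⟨i, rfl⟩)
  refine ⟨N, hN, ψ, φ, p, hψ, hφ, hp₀, hp₁, ?_⟩
  simp only [hψφ, Complex.coe_smul]

/-- Any separable state on `ℂ^{m₁} ⊗ ℂ^{m₂}` (with `m = m₁ m₂`)
is a convex combination of at most `m²` pure product states
`P_{ψ_i} ⊗ P_{φ_i}`. -/
theorem separable_finite_decomposition {m₁ m₂ : ℕ}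
    (ρ : Matrix (Fin m₁ × Fin m₂) (Fin m₁ × Fin m₂) ℂ)
    (hρ : IsState ρ) (hsep : IsSepState ρ) :
    ∃ N : ℕ, N ≤ (m₁ * m₂) ^ 2 ∧
      ∃ (ψ : Fin N → Fin m₁ → ℂ) (φ : Fin N → Fin m₂ → ℂ) (p : Fin N → ℝ),
        (∀ i, ∑ j, ‖ψ i j‖ ^ 2 = 1) ∧
        (∀ i, ∑ j, ‖φ i j‖ ^ 2 = 1) ∧
        (∀ i, 0 ≤ p i) ∧ (∑ i, p i) = 1 ∧
        ρ = ∑ i, (p i : ℂ) • (proj (ψ i) ⊗ₖ proj (φ i)) :=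
  separable_finite_decomposition_general ρ hsep
end
end

section
/- If ρ is a separable state on ℂ^{m₁} ⊗ ℂ^{m₂}, then its partial transposition ρ^{T₂} is positive semidefinite (and is again a separable state). -/
open scoped ComplexOrder
open Matrix Kronecker

noncomputable section

/-!
The positive semidefinite matrices form a closed convex set containing every product state
`A ⊗ B`, hence every separable state. Partial transposition is continuous and linear and sends
`A ⊗ B` to `A ⊗ Bᵀ`, again a product state since `Bᵀ` is a state; so it preserves the closure of
the convex hull of product states, i.e. separability. It also preserves the trace.
-/

theorem ContinuousLinearMap.mapsTo_closure_convexHull {𝕜 E F : Type*} [Semiring 𝕜]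
    [PartialOrder 𝕜] [AddCommMonoid E] [Module 𝕜 E] [TopologicalSpace E] [AddCommMonoid F]
    [Module 𝕜 F] [TopologicalSpace F] (f : E →L[𝕜] F) {s : Set E} {t : Set F}
    (h : Set.MapsTo f s t) :
    Set.MapsTo f (closure (convexHull 𝕜 s)) (closure (convexHull 𝕜 t)) := by
  refine Set.MapsTo.closure (Set.mapsTo_iff_image_subset.mpr ?_) f.continuous
  rw [← ContinuousLinearMap.coe_coe, LinearMap.image_convexHull]
  exact convexHull_mono h.image_subset

namespace Matrix

variable {𝕜 n : Type*} [RCLike 𝕜]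

theorem isClosed_setOf_posSemidef [Fintype n] :
    IsClosed {A : Matrix n n 𝕜 | A.PosSemidef} := by
  simp only [posSemidef_iff_dotProduct_mulVec, Set.ofPred_and, Set.ofPred_forall]
  refine .inter (isClosed_eq continuous_id.matrix_conjTranspose continuous_id)
    (isClosed_iInter fun x => isClosed_le continuous_const ?_)
  exact continuous_const.dotProduct (continuous_id.matrix_mulVec continuous_const)

theorem convex_setOf_posSemidef : Convex ℝ {A : Matrix n n 𝕜 | A.PosSemidef} :=
  fun _ hA _ hB _ _ ha hb _ => (hA.smul ha).add (hB.smul hb)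

end Matrix

theorem IsState.transpose {n : Type*} [Fintype n] [DecidableEq n] {A : Matrix n n ℂ}
    (hA : IsState A) : IsState Aᵀ :=
  ⟨hA.1.transpose, (trace_transpose A).trans hA.2⟩

section PartialTranspose

variable {m₁ m₂ : ℕ}

variable (m₁ m₂) in
def productStates : Set (Matrix (Fin m₁ × Fin m₂) (Fin m₁ × Fin m₂) ℂ) :=
  {σ | ∃ (A : Matrix (Fin m₁) (Fin m₁) ℂ) (B : Matrix (Fin m₂) (Fin m₂) ℂ),
    IsState A ∧ IsState B ∧ σ = A ⊗ₖ B}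

theorem IsSepState.posSemidef {ρ : Matrix (Fin m₁ × Fin m₂) (Fin m₁ × Fin m₂) ℂ}
    (hρ : IsSepState ρ) : ρ.PosSemidef := by
  have hprod : productStates m₁ m₂ ⊆ {σ | σ.PosSemidef} := by
    rintro _ ⟨A, B, hA, hB, rfl⟩
    exact hA.1.kronecker hB.1
  exact isClosed_setOf_posSemidef.closure_subset
    (closure_mono (convexHull_min hprod convex_setOf_posSemidef) hρ)

theorem pt₂_kronecker (A : Matrix (Fin m₁) (Fin m₁) ℂ) (B : Matrix (Fin m₂) (Fin m₂) ℂ) :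
    pt₂ (A ⊗ₖ B) = A ⊗ₖ Bᵀ :=
  rfl

theorem trace_pt₂ (ρ : Matrix (Fin m₁ × Fin m₂) (Fin m₁ × Fin m₂) ℂ) :
    (pt₂ ρ).trace = ρ.trace :=
  rfl

variable (m₁ m₂) in
def pt₂CLM :
    Matrix (Fin m₁ × Fin m₂) (Fin m₁ × Fin m₂) ℂ →L[ℝ]
      Matrix (Fin m₁ × Fin m₂) (Fin m₁ × Fin m₂) ℂ where
  toFun := pt₂
  map_add' _ _ := rfl
  map_smul' _ _ := rfl
  cont := continuous_pi fun _ => continuous_pi fun _ => continuous_apply_apply _ _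

theorem mapsTo_pt₂_productStates :
    Set.MapsTo pt₂ (productStates m₁ m₂) (productStates m₁ m₂) := by
  rintro _ ⟨A, B, hA, hB, rfl⟩
  exact ⟨A, Bᵀ, hA, hB.transpose, pt₂_kronecker A B⟩

theorem IsSepState.pt₂ {ρ : Matrix (Fin m₁ × Fin m₂) (Fin m₁ × Fin m₂) ℂ}
    (hρ : IsSepState ρ) : IsSepState (pt₂ ρ) :=
  (pt₂CLM m₁ m₂).mapsTo_closure_convexHull mapsTo_pt₂_productStates hρ

end PartialTranspose

/-- **Peres criterion.** The partial transposition of a separable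
state is positive semidefinite, and it is again a separable state. -/
theorem partial_transpose_of_separable {m₁ m₂ : ℕ}
    (ρ : Matrix (Fin m₁ × Fin m₂) (Fin m₁ × Fin m₂) ℂ)
    (hρ : IsState ρ) (hsep : IsSepState ρ) :
    (pt₂ ρ).PosSemidef ∧ IsState (pt₂ ρ) ∧ IsSepState (pt₂ ρ) := by
  have hsep' : IsSepState (pt₂ ρ) := hsep.pt₂
  have htrace : (pt₂ ρ).trace = 1 := (trace_pt₂ ρ).trans hρ.2
  exact ⟨hsep'.posSemidef, ⟨hsep'.posSemidef, htrace⟩, hsep'⟩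
end
end

section
/- Fix a with 0 < a < 1 and set x = √((1+a)/(1−a)). Every nonzero product vector u = ψ ⊗ φ (ψ, φ ∈ ℂ³) lying in the range of ρ_a^{T₂} is a scalar multiple of one of the following: (1,s,0)⊗(1,s,0) for some s ∈ ℂ; (0,0,1)⊗(1,0,x); (0,1,0)⊗(0,1,0); (1,0,0)⊗(1,0,0); or (1,0,t)⊗(t^{-1}+x^{-1},0,1) for some nonzero t ∈ ℂ (coordinates in the standard basis). -/
open scoped ComplexOrder
open Matrix Kronecker

noncomputable section

/-- Standard basis vectors of `ℂ^n`. -/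
def e (n : ℕ) (i : Fin n) : Fin n → ℂ := fun j => if j = i then 1 else 0

/-- The maximally entangled vector `Ψ = (e₁⊗e₁ + e₂⊗e₂ + e₃⊗e₃)/√3`. -/
def Ψ3 : Fin 3 × Fin 3 → ℂ :=
  (Real.sqrt 3 : ℂ)⁻¹ •
    (tens (e 3 0) (e 3 0) + tens (e 3 1) (e 3 1) + tens (e 3 2) (e 3 2))

/-- The projector `Q = I⊗I − (Σ_i P_{e_i⊗e_i} + P_{e₃⊗e₁})`. -/
def Q3 : Matrix (Fin 3 × Fin 3) (Fin 3 × Fin 3) ℂ :=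
  1 - (∑ i : Fin 3, proj (tens (e 3 i) (e 3 i)) + proj (tens (e 3 2) (e 3 0)))

/-- The inseparable state `ρ_insep = (3/8) P_Ψ + (1/8) Q`. -/
def ρinsep : Matrix (Fin 3 × Fin 3) (Fin 3 × Fin 3) ℂ :=
  (3 / 8 : ℂ) • proj Ψ3 + (1 / 8 : ℂ) • Q3

/-- The product vector `Φ_a = e₃ ⊗ (√((1+a)/2) e₁ + √((1−a)/2) e₃)`. -/
def Φa (a : ℝ) : Fin 3 × Fin 3 → ℂ :=
  tens (e 3 2) (fun j =>
    if j = 0 then (Real.sqrt ((1 + a) / 2) : ℂ)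
    else if j = 2 then (Real.sqrt ((1 - a) / 2) : ℂ) else 0)

/-- The Horodecki state `ρ_a = (8a/(8a+1)) ρ_insep + (1/(8a+1)) P_{Φ_a}`. -/
def ρA (a : ℝ) : Matrix (Fin 3 × Fin 3) (Fin 3 × Fin 3) ℂ :=
  ((8 * a / (8 * a + 1) : ℝ) : ℂ) • ρinsep +
    ((1 / (8 * a + 1) : ℝ) : ℂ) • proj (Φa a)

/-!
Every vector `u` in the range of `ρ_a^{T₂}` satisfies three linear equations, read off from
linear relations among the rows of `ρ_a^{T₂}`:
`u(0,1) = u(1,0)`, `u(1,2) = u(2,1)` and `x (u(0,2) - u(2,0)) + u(2,2) = 0` with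
`x = √((1+a)/(1-a))`. The third one comes from the row combination
`√((1+a)/2) (r(0,2) - r(2,0)) + √((1-a)/2) r(2,2)`: on `ρ_insep^{T₂}` it gives `Φ_a / 8`, on
`P_{Φ_a}^{T₂} = P_{Φ_a}` it gives `-a Φ_a`, and the weights `8a/(8a+1)` and `1/(8a+1)` make the
two cancel. For `u = ψ ⊗ φ` the equations are quadratic in the coordinates, and a case split on
`ψ 2 = 0` and `ψ 0 = 0` solves them.
-/

theorem pt₂_proj_tens {m₁ m₂ : ℕ} (ψ : Fin m₁ → ℂ) (φ : Fin m₂ → ℂ) :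
    pt₂ (proj (tens ψ φ)) = proj (tens ψ (star φ)) := by
  ext p q
  simp only [pt₂, proj, tens, Pi.star_apply, star_mul', star_star]
  ring

theorem tens_ne_zero_iff {m₁ m₂ : ℕ} {ψ : Fin m₁ → ℂ} {φ : Fin m₂ → ℂ} :
    tens ψ φ ≠ 0 ↔ ψ ≠ 0 ∧ φ ≠ 0 := by
  simp only [ne_eq, funext_iff, tens, Pi.zero_apply, mul_eq_zero, Prod.forall, not_forall]
  constructor
  · rintro ⟨i, j, h⟩
    exact ⟨⟨i, fun hi => h (Or.inl hi)⟩, ⟨j, fun hj => h (Or.inr hj)⟩⟩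
  · rintro ⟨⟨i, hi⟩, ⟨j, hj⟩⟩
    exact ⟨i, j, by tauto⟩

theorem tens_smul_smul {m₁ m₂ : ℕ} (c d : ℂ) (ψ : Fin m₁ → ℂ) (φ : Fin m₂ → ℂ) :
    tens (c • ψ) (d • φ) = (c * d) • tens ψ φ := by
  ext p
  simp only [tens, Pi.smul_apply, smul_eq_mul]
  ring

theorem eq_vec3 {α : Type*} (v : Fin 3 → α) : v = ![v 0, v 1, v 2] :=
  (FinVec.etaExpand_eq v).symm

theorem Φa_eq (a : ℝ) :
    Φa a = (Real.sqrt ((1 + a) / 2) : ℂ) • tens (e 3 2) (e 3 0) +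
      (Real.sqrt ((1 - a) / 2) : ℂ) • tens (e 3 2) (e 3 2) := by
  ext ⟨i, j⟩
  fin_cases j <;> simp [Φa, tens, e]

theorem star_Φa (a : ℝ) : star (Φa a) = Φa a := by
  ext ⟨i, j⟩
  fin_cases i <;> fin_cases j <;> simp [Φa, tens, e, Complex.conj_ofReal]

theorem pt₂_proj_Φa (a : ℝ) : pt₂ (proj (Φa a)) = proj (Φa a) := by
  rw [Φa, pt₂_proj_tens]
  congr 3
  ext j
  fin_cases j <;> simp [Complex.conj_ofReal]

theorem sqrt3_inv_mul_self : ((Real.sqrt 3 : ℝ) : ℂ)⁻¹ * ((Real.sqrt 3 : ℝ) : ℂ)⁻¹ = 3⁻¹ := by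
  rw [← mul_inv, ← Complex.ofReal_mul, Real.mul_self_sqrt (by norm_num)]
  norm_num

-- `P_Ψ^{T₂}` is the swap operator divided by 3, and `Q` is diagonal, hence fixed by `T₂`.
theorem pt₂_ρinsep_row_01 : pt₂ ρinsep (0, 1) = pt₂ ρinsep (1, 0) := by
  ext ⟨i, μ⟩
  fin_cases i <;> fin_cases μ <;>
    simp [pt₂, ρinsep, Q3, Ψ3, proj, tens, e, Fin.sum_univ_three, sqrt3_inv_mul_self] <;>
    norm_num

theorem pt₂_ρinsep_row_12 : pt₂ ρinsep (1, 2) = pt₂ ρinsep (2, 1) := by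
  ext ⟨i, μ⟩
  fin_cases i <;> fin_cases μ <;>
    simp [pt₂, ρinsep, Q3, Ψ3, proj, tens, e, Fin.sum_univ_three, sqrt3_inv_mul_self] <;>
    norm_num

theorem pt₂_ρinsep_row_02_sub_20 :
    pt₂ ρinsep (0, 2) - pt₂ ρinsep (2, 0) = (8⁻¹ : ℂ) • tens (e 3 2) (e 3 0) := by
  ext ⟨i, μ⟩
  fin_cases i <;> fin_cases μ <;>
    simp [pt₂, ρinsep, Q3, Ψ3, proj, tens, e, Fin.sum_univ_three, sqrt3_inv_mul_self] <;>
    norm_num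

theorem pt₂_ρinsep_row_22 : pt₂ ρinsep (2, 2) = (8⁻¹ : ℂ) • tens (e 3 2) (e 3 2) := by
  ext ⟨i, μ⟩
  fin_cases i <;> fin_cases μ <;>
    simp [pt₂, ρinsep, Q3, Ψ3, proj, tens, e, Fin.sum_univ_three, sqrt3_inv_mul_self]
  norm_num

theorem pt₂_ρA (a : ℝ) :
    pt₂ (ρA a) = ((8 * a / (8 * a + 1) : ℝ) : ℂ) • pt₂ ρinsep +
      ((1 / (8 * a + 1) : ℝ) : ℂ) • proj (Φa a) := by
  rw [← pt₂_proj_Φa]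
  ext p q
  simp [pt₂, ρA]

theorem pt₂_ρA_row (a : ℝ) (p : Fin 3 × Fin 3) :
    pt₂ (ρA a) p = ((8 * a / (8 * a + 1) : ℝ) : ℂ) • pt₂ ρinsep p +
      ((1 / (8 * a + 1) : ℝ) : ℂ) • (Φa a p • Φa a) := by
  ext q
  have hq : star (Φa a q) = Φa a q := congrFun (star_Φa a) q
  simp [pt₂_ρA, proj, hq]

theorem pt₂_ρA_row_01 (a : ℝ) : pt₂ (ρA a) (0, 1) = pt₂ (ρA a) (1, 0) := by
  simp [pt₂_ρA_row, pt₂_ρinsep_row_01, Φa, tens, e]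

theorem pt₂_ρA_row_12 (a : ℝ) : pt₂ (ρA a) (1, 2) = pt₂ (ρA a) (2, 1) := by
  simp [pt₂_ρA_row, pt₂_ρinsep_row_12, Φa, tens, e]

theorem pt₂_ρA_row_relation (a : ℝ) (ha : -1 ≤ a) (ha' : a ≤ 1) :
    (Real.sqrt ((1 + a) / 2) : ℂ) • (pt₂ (ρA a) (0, 2) - pt₂ (ρA a) (2, 0)) +
      (Real.sqrt ((1 - a) / 2) : ℂ) • pt₂ (ρA a) (2, 2) = 0 := by
  set sP : ℂ := (Real.sqrt ((1 + a) / 2) : ℂ)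
  set sQ : ℂ := (Real.sqrt ((1 - a) / 2) : ℂ)
  have hsq : sP * sP - sQ * sQ = a := by
    simp only [sP, sQ, ← Complex.ofReal_mul, Real.mul_self_sqrt (by linarith : 0 ≤ (1 + a) / 2),
      Real.mul_self_sqrt (by linarith : 0 ≤ (1 - a) / 2)]
    push_cast
    ring
  have hΦ02 : Φa a (0, 2) = 0 := by simp [Φa, tens, e]
  have hΦ20 : Φa a (2, 0) = sP := by simp [Φa, tens, e, sP]
  have hΦ22 : Φa a (2, 2) = sQ := by simp [Φa, tens, e, sQ]
  have hweights : ((8 * a / (8 * a + 1) : ℝ) : ℂ) = 8 * (((1 / (8 * a + 1) : ℝ) : ℂ) * a) := by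
    push_cast
    ring
  rw [pt₂_ρA_row, pt₂_ρA_row, pt₂_ρA_row, hΦ02, hΦ20, hΦ22]
  set α : ℂ := ((8 * a / (8 * a + 1) : ℝ) : ℂ)
  set β : ℂ := ((1 / (8 * a + 1) : ℝ) : ℂ)
  linear_combination (norm := module) (α * sP) • pt₂_ρinsep_row_02_sub_20 +
    (α * sQ) • pt₂_ρinsep_row_22 - ((8⁻¹ : ℂ) * α) • Φa_eq a - β • (hsq • Φa a) +
    (8⁻¹ : ℂ) • (hweights • Φa a)

def RangeEquations (x : ℂ) (u : Fin 3 × Fin 3 → ℂ) : Prop :=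
  u (0, 1) = u (1, 0) ∧ u (1, 2) = u (2, 1) ∧ x * (u (0, 2) - u (2, 0)) + u (2, 2) = 0

theorem rangeEquations_pt₂_ρA_mulVec (a : ℝ) (ha : -1 ≤ a) (ha' : a < 1)
    (w : Fin 3 × Fin 3 → ℂ) :
    RangeEquations (Real.sqrt ((1 + a) / (1 - a)) : ℂ) (pt₂ (ρA a) *ᵥ w) := by
  have hQ : (Real.sqrt ((1 - a) / 2) : ℂ) ≠ 0 := by
    simpa using Real.sqrt_ne_zero'.2 (by linarith : 0 < (1 - a) / 2)
  have hx : (Real.sqrt ((1 + a) / (1 - a)) : ℂ) =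
      (Real.sqrt ((1 + a) / 2) : ℂ) / (Real.sqrt ((1 - a) / 2) : ℂ) := by
    rw [← Complex.ofReal_div, ← Real.sqrt_div (by linarith), div_div_div_cancel_right₀ two_ne_zero]
  refine ⟨congrArg (· ⬝ᵥ w) (pt₂_ρA_row_01 a), congrArg (· ⬝ᵥ w) (pt₂_ρA_row_12 a), ?_⟩
  have h := congrArg (· ⬝ᵥ w) (pt₂_ρA_row_relation a ha ha'.le)
  simp only [add_dotProduct, sub_dotProduct, smul_dotProduct, zero_dotProduct, smul_eq_mul] at h
  simp only [mulVec_apply, row_apply']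
  rw [hx, div_mul_eq_mul_div, div_add' _ _ _ hQ, div_eq_zero_iff]
  exact Or.inl (by linear_combination h)

section ProductVectors

variable {ψ φ : Fin 3 → ℂ} {x : ℂ}

theorem RangeEquations.classify_of_apply_two_eq_zero (hx : x ≠ 0)
    (h : RangeEquations x (tens ψ φ)) (hψ : ψ ≠ 0) (hψ2 : ψ 2 = 0) :
    (∃ c s : ℂ, tens ψ φ = c • tens ![1, s, 0] ![1, s, 0]) ∨
      (∃ c : ℂ, tens ψ φ = c • tens ![0, 1, 0] ![0, 1, 0]) := by
  obtain ⟨h01, h12, h22⟩ : ψ 0 * φ 1 = ψ 1 * φ 0 ∧ ψ 1 * φ 2 = ψ 2 * φ 1 ∧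
      x * (ψ 0 * φ 2 - ψ 2 * φ 0) + ψ 2 * φ 2 = 0 := h
  have hφ2 : φ 2 = 0 := by
    by_contra hφ2
    have hψ1 : ψ 1 = 0 := by simpa [hψ2, hφ2] using h12
    have hψ0 : ψ 0 = 0 := by simpa [hψ2, hφ2, hx] using h22
    exact hψ (by rw [eq_vec3 ψ, hψ0, hψ1, hψ2]; simp)
  by_cases hψ0 : ψ 0 = 0
  · have hψ1 : ψ 1 ≠ 0 := fun hψ1 => hψ (by rw [eq_vec3 ψ, hψ0, hψ1, hψ2]; simp)
    have hφ0 : φ 0 = 0 := by simpa [hψ0, hψ1] using h01.symm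
    refine Or.inr ⟨ψ 1 * φ 1, ?_⟩
    rw [← tens_smul_smul, eq_vec3 ψ, eq_vec3 φ, hψ0, hψ2, hφ0, hφ2]
    simp
  · have hφ1 : φ 1 = φ 0 * (ψ 1 / ψ 0) := by
      field_simp
      linear_combination h01
    refine Or.inl ⟨ψ 0 * φ 0, ψ 1 / ψ 0, ?_⟩
    rw [← tens_smul_smul, eq_vec3 ψ, eq_vec3 φ, hψ2, hφ1, hφ2]
    simp [mul_div_cancel₀ _ hψ0]

theorem RangeEquations.classify_of_apply_two_ne_zero (hx : x ≠ 0)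
    (h : RangeEquations x (tens ψ φ)) (hφ : φ ≠ 0) (hψ2 : ψ 2 ≠ 0) :
    (∃ c : ℂ, tens ψ φ = c • tens ![0, 0, 1] ![1, 0, x]) ∨
      (∃ c t : ℂ, t ≠ 0 ∧ tens ψ φ = c • tens ![1, 0, t] ![t⁻¹ + x⁻¹, 0, 1]) := by
  obtain ⟨h01, h12, h22⟩ : ψ 0 * φ 1 = ψ 1 * φ 0 ∧ ψ 1 * φ 2 = ψ 2 * φ 1 ∧
      x * (ψ 0 * φ 2 - ψ 2 * φ 0) + ψ 2 * φ 2 = 0 := h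
  have hφ2 : φ 2 ≠ 0 := by
    intro hφ2
    have hφ1 : φ 1 = 0 := by simpa [hψ2, hφ2] using h12.symm
    have hφ0 : φ 0 = 0 := by simpa [hψ2, hφ2, hx] using h22
    exact hφ (by rw [eq_vec3 φ, hφ0, hφ1, hφ2]; simp)
  have hψ1 : ψ 1 = 0 := by
    have : ψ 1 * (ψ 2 * φ 2) = 0 := by
      linear_combination ψ 1 * h22 - x * (ψ 0 * h12 + ψ 2 * h01)
    simpa [hψ2, hφ2] using this
  have hφ1 : φ 1 = 0 := by simpa [hψ1, hψ2] using h12.symm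
  by_cases hψ0 : ψ 0 = 0
  · have hφ2' : φ 2 = φ 0 * x := by
      have : ψ 2 * (φ 2 - φ 0 * x) = 0 := by linear_combination h22 - x * φ 2 * hψ0
      simpa [hψ2, sub_eq_zero] using this
    refine Or.inl ⟨ψ 2 * φ 0, ?_⟩
    rw [← tens_smul_smul, eq_vec3 ψ, eq_vec3 φ, hψ0, hψ1, hφ1, hφ2']
    simp
  · have hφ0 : φ 0 = φ 2 * ((ψ 2 / ψ 0)⁻¹ + x⁻¹) := by
      field_simp
      linear_combination -h22
    refine Or.inr ⟨ψ 0 * φ 2, ψ 2 / ψ 0, div_ne_zero hψ2 hψ0, ?_⟩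
    rw [← tens_smul_smul, eq_vec3 ψ, eq_vec3 φ, hψ1, hφ0, hφ1]
    simp [mul_div_cancel₀ _ hψ0]

end ProductVectors

/-- For `0 < a < 1` and `x = √((1+a)/(1−a))`, every nonzero
product vector in the range of `ρ_a^{T₂}` is a scalar multiple of one of:
`(1,s,0)⊗(1,s,0)`, `(0,0,1)⊗(1,0,x)`, `(0,1,0)⊗(0,1,0)`, `(1,0,0)⊗(1,0,0)`,
or `(1,0,t)⊗(t⁻¹+x⁻¹,0,1)` with `t ≠ 0`. -/
theorem product_vectors_in_range_ρA_pt₂ (a : ℝ) (ha0 : 0 < a) (ha1 : a < 1)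
    (ψ φ : Fin 3 → ℂ) (hne : tens ψ φ ≠ 0)
    (hmem : ∃ w, (pt₂ (ρA a)).mulVec w = tens ψ φ) :
    (∃ c s : ℂ, tens ψ φ = c • tens ![1, s, 0] ![1, s, 0]) ∨
    (∃ c : ℂ, tens ψ φ =
      c • tens ![0, 0, 1] ![1, 0, (Real.sqrt ((1 + a) / (1 - a)) : ℂ)]) ∨
    (∃ c : ℂ, tens ψ φ = c • tens ![0, 1, 0] ![0, 1, 0]) ∨
    (∃ c : ℂ, tens ψ φ = c • tens ![1, 0, 0] ![1, 0, 0]) ∨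
    (∃ c t : ℂ, t ≠ 0 ∧ tens ψ φ =
      c • tens ![1, 0, t] ![t⁻¹ + (Real.sqrt ((1 + a) / (1 - a)) : ℂ)⁻¹, 0, 1]) := by
  obtain ⟨w, hw⟩ := hmem
  have h : RangeEquations (Real.sqrt ((1 + a) / (1 - a)) : ℂ) (tens ψ φ) :=
    hw ▸ rangeEquations_pt₂_ρA_mulVec a (by linarith) ha1 w
  have hx : (Real.sqrt ((1 + a) / (1 - a)) : ℂ) ≠ 0 := by
    simpa using Real.sqrt_ne_zero'.2 (div_pos (by linarith) (by linarith))
  obtain ⟨hψ, hφ⟩ := tens_ne_zero_iff.1 hne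
  by_cases hψ2 : ψ 2 = 0
  · rcases h.classify_of_apply_two_eq_zero hx hψ hψ2 with h | h
    exacts [Or.inl h, Or.inr (Or.inr (Or.inl h))]
  · rcases h.classify_of_apply_two_ne_zero hx hφ hψ2 with h | h
    exacts [Or.inr (Or.inl h), Or.inr (Or.inr (Or.inr (Or.inr h)))]
end
end

section
/- Fix a with 0 < a < 1. For every product vector ψ ⊗ φ in the range of ρ_a^{T₂}, the partially conjugated vector ψ ⊗ φ* (φ* the componentwise complex conjugate of φ) is orthogonal to the vector e₃ ⊗ e₂; moreover e₃ ⊗ e₂ belongs to the range of ρ_a. Hence no family of product vectors in the range of ρ_a^{T₂} has partial conjugates spanning the range of ρ_a. -/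
open scoped ComplexOrder
open Matrix Kronecker

noncomputable section

/-!
The matrix `ρ_a^{T₂}` is Hermitian, so its range is orthogonal to its kernel, which contains
`e₁⊗e₂ - e₂⊗e₁`, `e₂⊗e₃ - e₃⊗e₂` and `b (e₃⊗e₁ - e₁⊗e₃) - c e₃⊗e₃`, where `b = √((1+a)/2)` and
`c = √((1-a)/2)`; for the last one the point is `b² - c² = a`. A product vector `ψ⊗φ` satisfying
these three linear relations has `ψ₃ φ₂ = 0` as soon as `c ≠ 0`, and `ψ₃ φ₂` is, up to conjugation,
the inner product of `ψ⊗φ*` with `e₃⊗e₂`. On the other hand `e₃⊗e₂` is an eigenvector of `ρ_a`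
with eigenvalue `a/(8a+1) ≠ 0`, so it lies in the range of `ρ_a` but is not orthogonal to itself.
-/

theorem proj_mulVec {n : Type*} [Fintype n] (ψ v : n → ℂ) :
    proj ψ *ᵥ v = (star ψ ⬝ᵥ v) • ψ := by
  ext i
  simp only [mulVec, dotProduct, proj, Pi.smul_apply, smul_eq_mul, Pi.star_apply, Finset.sum_mul]
  exact Finset.sum_congr rfl fun j _ => by ring

theorem star_tens_dotProduct_tens {m₁ m₂ : ℕ} (ψ ψ' : Fin m₁ → ℂ) (φ φ' : Fin m₂ → ℂ) :
    star (tens ψ φ) ⬝ᵥ tens ψ' φ' = (star ψ ⬝ᵥ ψ') * (star φ ⬝ᵥ φ') := by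
  simp only [dotProduct, tens, Pi.star_apply, star_mul', Fintype.sum_prod_type,
    Finset.sum_mul_sum]
  exact Finset.sum_congr rfl fun i _ => Finset.sum_congr rfl fun j _ => by ring

theorem dotProduct_e {n : ℕ} (ψ : Fin n → ℂ) (i : Fin n) : ψ ⬝ᵥ e n i = ψ i := by
  simp [dotProduct, e]

theorem star_dotProduct_eq_zero_of_mem_span {n : Type*} [Fintype n] {s : Set (n → ℂ)}
    {v : n → ℂ} (hs : ∀ x ∈ s, star x ⬝ᵥ v = 0) {y : n → ℂ} (hy : y ∈ Submodule.span ℂ s) :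
    star y ⬝ᵥ v = 0 := by
  induction hy using Submodule.span_induction with
  | mem x hx => exact hs x hx
  | zero => simp
  | add x y _ _ hx hy => rw [star_add, add_dotProduct, hx, hy, add_zero]
  | smul c x _ hx => rw [star_smul, smul_dotProduct, hx, smul_zero]

theorem mem_range_mulVecLin_of_mulVec_eq_smul {n : Type*} [Fintype n] {M : Matrix n n ℂ}
    {v : n → ℂ} {c : ℂ} (hc : c ≠ 0) (hv : M *ᵥ v = c • v) :
    v ∈ LinearMap.range M.mulVecLin :=
  ⟨c⁻¹ • v, by rw [mulVecLin_apply, mulVec_smul, hv, smul_smul, inv_mul_cancel₀ hc, one_smul]⟩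

theorem tens_apply_two_one_eq_zero {ψ φ : Fin 3 → ℂ} {b c : ℂ} (hc : c ≠ 0)
    (h₀₁ : tens ψ φ (0, 1) = tens ψ φ (1, 0)) (h₁₂ : tens ψ φ (1, 2) = tens ψ φ (2, 1))
    (h₂₀ : b * tens ψ φ (2, 0) = b * tens ψ φ (0, 2) + c * tens ψ φ (2, 2)) :
    tens ψ φ (2, 1) = 0 := by
  simp only [tens] at *
  have key : c * (ψ 2 * φ 1) * φ 2 = 0 := by
    linear_combination (-φ 1) * h₂₀ - b * φ 2 * h₀₁ - b * φ 0 * h₁₂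
  rcases mul_eq_zero.1 key with h | h
  · exact (mul_eq_zero.1 h).resolve_left hc
  · rw [← h₁₂, h, mul_zero]

theorem ρinsep_mulVec_tens_e_two_one :
    ρinsep *ᵥ tens (e 3 2) (e 3 1) = (1 / 8 : ℂ) • tens (e 3 2) (e 3 1) := by
  simp [ρinsep, Q3, Ψ3, add_mulVec, smul_mulVec, sub_mulVec, proj_mulVec,
    star_tens_dotProduct_tens, dotProduct_e, e, Fin.sum_univ_three]

theorem proj_Φa_mulVec_tens_e_two_one (a : ℝ) : proj (Φa a) *ᵥ tens (e 3 2) (e 3 1) = 0 := by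
  rw [proj_mulVec, Φa, star_tens_dotProduct_tens, dotProduct_e, dotProduct_e]
  simp

theorem ρA_mulVec_tens_e_two_one (a : ℝ) :
    ρA a *ᵥ tens (e 3 2) (e 3 1) = ((a / (8 * a + 1) : ℝ) : ℂ) • tens (e 3 2) (e 3 1) := by
  rw [ρA, add_mulVec, smul_mulVec, smul_mulVec, ρinsep_mulVec_tens_e_two_one,
    proj_Φa_mulVec_tens_e_two_one, smul_zero, add_zero, smul_smul]
  congr 1
  push_cast
  ring

theorem pt₂_ρA_mulVec_relations (a : ℝ) (h₁ : -1 ≤ a) (h₂ : a ≤ 1) (w : Fin 3 × Fin 3 → ℂ) :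
    (pt₂ (ρA a) *ᵥ w) (0, 1) = (pt₂ (ρA a) *ᵥ w) (1, 0) ∧
    (pt₂ (ρA a) *ᵥ w) (1, 2) = (pt₂ (ρA a) *ᵥ w) (2, 1) ∧
    (√((1 + a) / 2) : ℂ) * (pt₂ (ρA a) *ᵥ w) (2, 0) =
      (√((1 + a) / 2) : ℂ) * (pt₂ (ρA a) *ᵥ w) (0, 2) +
        (√((1 - a) / 2) : ℂ) * (pt₂ (ρA a) *ᵥ w) (2, 2) := by
  have hbc : ((√((1 + a) / 2) : ℝ) : ℂ) ^ 2 - ((√((1 - a) / 2) : ℝ) : ℂ) ^ 2 = a := by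
    rw [← Complex.ofReal_pow, ← Complex.ofReal_pow, Real.sq_sqrt (by linarith),
      Real.sq_sqrt (by linarith)]
    push_cast
    ring
  have h3 : ((√3 : ℝ) : ℂ)⁻¹ * ((√3 : ℝ) : ℂ)⁻¹ = 3⁻¹ := by
    rw [← mul_inv, ← Complex.ofReal_mul, Real.mul_self_sqrt (by norm_num)]
    norm_num
  simp only [mulVec, dotProduct, Fintype.sum_prod_type, Fin.sum_univ_three]
  simp only [pt₂, ρA, Complex.ofReal_div, Complex.ofReal_mul, Complex.ofReal_ofNat,
    Complex.ofReal_add, Complex.ofReal_one, ρinsep, Ψ3, Fin.isValue, smul_add, one_div, Q3,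
    Fin.sum_univ_three, Complex.ofReal_inv, Φa, Matrix.add_apply, Matrix.smul_apply, proj, Pi.add_apply,
    Pi.smul_apply, tens, e, ↓reduceIte, mul_one, smul_eq_mul, zero_ne_one, mul_zero, add_zero,
    Fin.reduceEq, one_ne_zero, star_zero, Matrix.sub_apply, one_apply, Prod.mk.injEq, and_false,
    sub_self, zero_mul, sub_zero, zero_add, star_inv₀, RCLike.star_def, Complex.conj_ofReal,
    and_self, star_one, and_true, one_mul, h3]
  refine ⟨by ring, by ring, ?_⟩
  linear_combination ((8 * (a : ℂ) + 1)⁻¹ * ((√((1 + a) / 2) : ℂ) * w (2, 0) +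
    (√((1 - a) / 2) : ℂ) * w (2, 2))) * hbc

theorem star_tens_conj_dotProduct_eq_zero_of_mem_range_pt₂_ρA (a : ℝ) (h₁ : -1 ≤ a)
    (h₂ : a < 1) {ψ φ : Fin 3 → ℂ} (h : ∃ w, pt₂ (ρA a) *ᵥ w = tens ψ φ) :
    star (tens ψ (fun j => star (φ j))) ⬝ᵥ tens (e 3 2) (e 3 1) = 0 := by
  obtain ⟨w, hw⟩ := h
  obtain ⟨h₀₁, h₁₂, h₂₀⟩ := pt₂_ρA_mulVec_relations a h₁ h₂.le w
  rw [hw] at h₀₁ h₁₂ h₂₀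
  have hc : ((√((1 - a) / 2) : ℝ) : ℂ) ≠ 0 :=
    Complex.ofReal_ne_zero.2 (Real.sqrt_pos.2 (by linarith)).ne'
  have h₂₁ : ψ 2 * φ 1 = 0 := tens_apply_two_one_eq_zero hc h₀₁ h₁₂ h₂₀
  rw [star_tens_dotProduct_tens, dotProduct_e, dotProduct_e]
  simpa [mul_comm] using h₂₁

/-- For `0 < a < 1`: the partial conjugate of every product
vector in the range of `ρ_a^{T₂}` is orthogonal to `e₃ ⊗ e₂`, while `e₃ ⊗ e₂`
belongs to the range of `ρ_a`; hence no family of product vectors in the range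
of `ρ_a^{T₂}` has partial conjugates spanning the range of `ρ_a`. -/
theorem ρA_range_criterion_violation (a : ℝ) (ha0 : 0 < a) (ha1 : a < 1) :
    (∀ ψ φ : Fin 3 → ℂ, (∃ w, (pt₂ (ρA a)).mulVec w = tens ψ φ) →
      star (tens ψ (fun j => star (φ j))) ⬝ᵥ tens (e 3 2) (e 3 1) = 0) ∧
    (∃ w, (ρA a).mulVec w = tens (e 3 2) (e 3 1)) ∧
    (∀ (ι : Type) (ψs φs : ι → Fin 3 → ℂ),
      (∀ i, ∃ w, (pt₂ (ρA a)).mulVec w = tens (ψs i) (φs i)) →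
      Submodule.span ℂ (Set.range fun i => tens (ψs i) (fun j => star (φs i j))) ≠
        LinearMap.range (ρA a).mulVecLin) := by
  have horth : ∀ ψ φ : Fin 3 → ℂ, (∃ w, pt₂ (ρA a) *ᵥ w = tens ψ φ) →
      star (tens ψ (fun j => star (φ j))) ⬝ᵥ tens (e 3 2) (e 3 1) = 0 := fun _ _ =>
    star_tens_conj_dotProduct_eq_zero_of_mem_range_pt₂_ρA a (by linarith) ha1
  have hrange : tens (e 3 2) (e 3 1) ∈ LinearMap.range (ρA a).mulVecLin :=
    mem_range_mulVecLin_of_mulVec_eq_smul (Complex.ofReal_ne_zero.2 (by positivity))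
      (ρA_mulVec_tens_e_two_one a)
  refine ⟨horth, hrange, fun ι ψs φs hψφ hspan => ?_⟩
  have hself := star_dotProduct_eq_zero_of_mem_span
    (by rintro _ ⟨i, rfl⟩; exact horth (ψs i) (φs i) (hψφ i)) (hspan ▸ hrange)
  rw [star_tens_dotProduct_tens, dotProduct_e, dotProduct_e] at hself
  simp [e] at hself
end
end
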